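/- arXiv:1911.12665 — 7 statements merged into one kernel-verified Lean document; each statement's English description precedes it below -/
import Mathlib

section
/- Let a, b ∈ ℝ satisfy b < 0 < a ≤ −b. Then for every natural number k ≥ 0, |a^{k+1} − b^{k+1}| ≤ (a − b) · |b|^k; equivalently, |(a^{k+1} − b^{k+1})/(a − b)| ≤ |b|^k. -/
theorem stmt_5 (a b : ℝ) (hb : b < 0) (ha : 0 < a) (hab : a ≤ -b) (k : ℕ) :
    |a ^ (k + 1) - b ^ (k + 1)| ≤ (a - b) * |b| ^ k ∧
      |(a ^ (k + 1) - b ^ (k + 1)) / (a - b)| ≤ |b| ^ k := by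
  have hcpos : (0:ℝ) < -b := by linarith
  have hcb : |b| = -b := abs_of_neg hb
  have habpos : (0:ℝ) < a - b := by linarith
  have hpowk : a ^ k ≤ (-b) ^ k := pow_le_pow_left₀ ha.le hab k
  have hpowpos : (0:ℝ) < (-b) ^ k := pow_pos hcpos k
  have hmain : |a ^ (k + 1) - b ^ (k + 1)| ≤ (a - b) * (-b) ^ k := by
    rcases Nat.even_or_odd k with hk | hk
    · have h1 : b ^ k = (-b) ^ k := (hk.neg_pow b).symm
      have h2 : a ^ (k+1) - b ^ (k+1) = a * a ^ k + (-b) * b ^ k := by ring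
      rw [abs_of_nonneg] <;> rw [h2, h1] <;> nlinarith [pow_pos ha k]
    · have h1 : b ^ k = -(-b) ^ k := by
        rw [hk.neg_pow b]; ring
      have h2 : a ^ (k+1) - b ^ (k+1) = a * a ^ k - (-b) * (-(b ^ k)) := by ring
      rw [abs_of_nonpos] <;> rw [h2, h1] <;> nlinarith [pow_pos ha k]
  refine ⟨by rwa [hcb], ?_⟩
  rw [abs_div, abs_of_pos habpos, div_le_iff₀ habpos, hcb]
  linarith [hmain]
end

section
/- Let λ ∈ (0, 1) and let θ ∈ ℝ satisfy cos θ = √λ and sin θ = √(1 − λ). Let N ≥ 1 and let (y_k)_{k≥0} and (l_k)_{k≥1} be sequences of vectors in ℝ^N with y_0 = 0 and y_{k+1} = λ(2y_k − y_{k−1} + l_k) for all k ≥ 1. Then for every k ≥ 0, y_{k+1} = (λ^{k/2} · sin((k+1)θ)/sin θ) · y_1 + λ · Σ_{s=1}^{k} (λ^{(k−s)/2} · sin((k+1−s)θ)/sin θ) · l_s. -/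
/-!
Write the recurrence as `y (n+2) = 2λ y (n+1) - λ y n + λ l (n+1)`. Its solution with `y 0 = 0` is
`c n • y 1` plus the discrete Duhamel sum `∑ c (n - s) • λ l s`, where `c` is the fundamental
solution of the homogeneous scalar recurrence (`c 0 = 1`, `c 1 = 2λ`). Since `2λ = 2 √λ cos θ`
and `λ = √λ²`, the addition formula `sin ((n+3)θ) = 2 cos θ sin ((n+2)θ) - sin ((n+1)θ)` shows that
`c n = √λ ^ n sin ((n+1)θ) / sin θ`.
-/

open Finset

section SecondOrderRecurrence

variable {R M : Type*} [CommRing R] [AddCommGroup M] [Module R M]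

theorem sum_Icc_smul_add_two_of_recurrence {p q : R} {c : ℕ → R}
    (hc : ∀ n, c (n + 2) = p * c (n + 1) + q * c n) (g : ℕ → M) (n : ℕ) :
    ∑ s ∈ Icc 1 n, c (n + 2 - s) • g s =
      p • ∑ s ∈ Icc 1 n, c (n + 1 - s) • g s + q • ∑ s ∈ Icc 1 n, c (n - s) • g s := by
  rw [smul_sum, smul_sum, ← sum_add_distrib]
  refine sum_congr rfl fun s hs => ?_
  obtain ⟨m, rfl⟩ := Nat.exists_eq_add_of_le (mem_Icc.mp hs).2
  rw [show s + m + 2 - s = m + 2 by omega, show s + m + 1 - s = m + 1 by omega,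
    Nat.add_sub_cancel_left, hc, add_smul, mul_smul, mul_smul]

theorem eq_smul_add_sum_of_recurrence {p q : R} {c : ℕ → R} (hc0 : c 0 = 1) (hc1 : c 1 = p)
    (hc : ∀ n, c (n + 2) = p * c (n + 1) + q * c n) {y g : ℕ → M} (hy0 : y 0 = 0)
    (hy : ∀ n, y (n + 2) = p • y (n + 1) + q • y n + g (n + 1)) (n : ℕ) :
    y (n + 1) = c n • y 1 + ∑ s ∈ Icc 1 n, c (n - s) • g s := by
  induction n using Nat.twoStepInduction with
  | zero => simp [hc0]
  | one => simp [hy 0, hy0, hc0, hc1]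
  | more n ih₀ ih₁ =>
    rw [hy, ih₀, ih₁, sum_Icc_succ_top (by omega), sum_Icc_succ_top (by omega),
      sum_Icc_succ_top (by omega), sum_Icc_smul_add_two_of_recurrence hc, hc]
    simp only [Nat.sub_self, show n + 2 - (n + 1) = 1 by omega, hc0, hc1]
    module

end SecondOrderRecurrence

section ScaledSinRatio

open Real

/-- `r ^ n U_n (cos θ)`, with `U_n` the Chebyshev polynomial of the second kind. -/
noncomputable def scaledSinRatio (r θ : ℝ) (n : ℕ) : ℝ :=
  r ^ n * sin (((n + 1 : ℕ) : ℝ) * θ) / sin θ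

variable {r θ : ℝ}

theorem scaledSinRatio_zero (hθ : sin θ ≠ 0) : scaledSinRatio r θ 0 = 1 := by
  simp [scaledSinRatio, hθ]

theorem scaledSinRatio_one (hθ : sin θ ≠ 0) : scaledSinRatio r θ 1 = 2 * r * cos θ := by
  rw [scaledSinRatio, show (((1 + 1 : ℕ) : ℝ) * θ) = 2 * θ by push_cast; ring, sin_two_mul]
  field_simp

theorem scaledSinRatio_add_two (n : ℕ) :
    scaledSinRatio r θ (n + 2) =
      2 * r * cos θ * scaledSinRatio r θ (n + 1) + -r ^ 2 * scaledSinRatio r θ n := by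
  have hsin : sin ((n + 3) * θ) = 2 * cos θ * sin ((n + 2) * θ) - sin ((n + 1) * θ) := by
    rw [show (n + 3) * θ = (n + 2) * θ + θ by ring, show (n + 1) * θ = (n + 2) * θ - θ by ring,
      sin_add, sin_sub]
    ring
  simp only [scaledSinRatio]
  push_cast
  rw [show (n : ℝ) + 2 + 1 = n + 3 by ring, show (n : ℝ) + 1 + 1 = n + 2 by ring, hsin]
  ring

end ScaledSinRatio

theorem stmt_7_general (lam : ℝ) (hlam : lam ∈ Set.Ioo (0 : ℝ) 1)
    (θ : ℝ) (hcos : Real.cos θ = Real.sqrt lam)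
    (N : ℕ)
    (y : ℕ → EuclideanSpace ℝ (Fin N)) (l : ℕ → EuclideanSpace ℝ (Fin N))
    (hy0 : y 0 = 0)
    (hrec : ∀ k, 1 ≤ k → y (k + 1) = lam • ((2 : ℝ) • y k - y (k - 1) + l k))
    (k : ℕ) :
    y (k + 1) = ((Real.sqrt lam) ^ k * Real.sin ((k + 1) * θ) / Real.sin θ) • y 1 +
      lam • ∑ s ∈ Finset.Icc 1 k,
        ((Real.sqrt lam) ^ (k - s) * Real.sin (((k + 1 - s : ℕ) : ℝ) * θ) / Real.sin θ) • l s := by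
  have hsq : Real.sqrt lam ^ 2 = lam := Real.sq_sqrt hlam.1.le
  have hsinθ : Real.sin θ ≠ 0 := by
    intro h
    have h1 := Real.sin_sq_add_cos_sq θ
    rw [h, hcos, hsq] at h1
    linarith [hlam.2]
  have hp : 2 * Real.sqrt lam * Real.cos θ = 2 * lam := by
    rw [hcos, mul_assoc, Real.mul_self_sqrt hlam.1.le]
  have hy (n : ℕ) : y (n + 2) = (2 * lam) • y (n + 1) + (-lam) • y n + lam • l (n + 1) := by
    rw [hrec (n + 1) (Nat.le_add_left 1 n), Nat.add_sub_cancel]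
    module
  have key := eq_smul_add_sum_of_recurrence (scaledSinRatio_zero hsinθ)
    ((scaledSinRatio_one hsinθ).trans hp) (fun n => by rw [scaledSinRatio_add_two, hp, hsq])
    hy0 (g := fun n => lam • l n) hy k
  rw [key, smul_sum]
  simp only [smul_smul]
  congr 1
  · simp [scaledSinRatio]
  · refine sum_congr rfl fun s hs => ?_
    rw [scaledSinRatio, show k - s + 1 = k + 1 - s by have := (mem_Icc.mp hs).2; omega, mul_comm]

theorem stmt_7 (lam : ℝ) (hlam : lam ∈ Set.Ioo (0 : ℝ) 1)
    (θ : ℝ) (hcos : Real.cos θ = Real.sqrt lam) (hsin : Real.sin θ = Real.sqrt (1 - lam))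
    (N : ℕ) (hN : 1 ≤ N)
    (y : ℕ → EuclideanSpace ℝ (Fin N)) (l : ℕ → EuclideanSpace ℝ (Fin N))
    (hy0 : y 0 = 0)
    (hrec : ∀ k, 1 ≤ k → y (k + 1) = lam • ((2 : ℝ) • y k - y (k - 1) + l k))
    (k : ℕ) :
    y (k + 1) = ((Real.sqrt lam) ^ k * Real.sin ((k + 1) * θ) / Real.sin θ) • y 1 +
      lam • ∑ s ∈ Finset.Icc 1 k,
        ((Real.sqrt lam) ^ (k - s) * Real.sin (((k + 1 - s : ℕ) : ℝ) * θ) / Real.sin θ) • l s :=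
  stmt_7_general lam hlam θ hcos N y l hy0 hrec k
end

section
/- Let λ ∈ (−1/3, 0) and set b = λ − √(λ² − λ). Let N ≥ 1 and let (y_k)_{k≥0} and (l_k)_{k≥1} be sequences of vectors in ℝ^N with y_0 = 0 and y_{k+1} = λ(2y_k − y_{k−1} + l_k) for all k ≥ 1. Then for every k ≥ 0, ‖y_{k+1}‖² ≤ 2‖y_1‖² · |b|^{2k} + 2λ² · (Σ_{s=1}^{k} |b|^{k−s} ‖l_s‖)². -/
open Finset

private lemma final_helper : ∀ u X S : ℝ, 0 ≤ u → 0 ≤ X → 0 ≤ S → u ≤ X + S → u^2 ≤ 2*X^2 + 2*S^2 := by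
  intro u X S hu0 hX hS hu
  nlinarith [sq_nonneg (X - S), mul_le_mul hu hu hu0 (by linarith : (0:ℝ) ≤ X + S)]

private lemma step_helper {N : ℕ} (lam c b : ℝ) (x z w : EuclideanSpace ℝ (Fin N))
    (h1 : c * b = lam) (h2 : c + b = 2 * lam) :
    lam • ((2:ℝ) • x - z + w) - b • x = c • (x - b • z) + lam • w := by
  match_scalars
  · linarith
  · linear_combination h1
  · ring

private lemma comb_helper {N : ℕ} (a b : ℝ) (x z : EuclideanSpace ℝ (Fin N)) :
    (a - b) • x = a • (x - b • z) + (-b) • (x - a • z) := by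
  match_scalars <;> ring

theorem stmt_8 (lam : ℝ) (hlam : lam ∈ Set.Ioo (-(1/3) : ℝ) 0)
    (b : ℝ) (hb : b = lam - Real.sqrt (lam ^ 2 - lam))
    (N : ℕ) (hN : 1 ≤ N)
    (y : ℕ → EuclideanSpace ℝ (Fin N)) (l : ℕ → EuclideanSpace ℝ (Fin N))
    (hy0 : y 0 = 0)
    (hrec : ∀ k, 1 ≤ k → y (k + 1) = lam • ((2 : ℝ) • y k - y (k - 1) + l k))
    (k : ℕ) :
    ‖y (k + 1)‖ ^ 2 ≤ 2 * ‖y 1‖ ^ 2 * |b| ^ (2 * k) +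
      2 * lam ^ 2 * (∑ s ∈ Finset.Icc 1 k, |b| ^ (k - s) * ‖l s‖) ^ 2 := by
  obtain ⟨hl1, hl2⟩ := hlam
  set sq := Real.sqrt (lam ^ 2 - lam) with hsqdef
  have hpos : (0:ℝ) < lam ^ 2 - lam := by nlinarith
  have hsq2 : sq ^ 2 = lam ^ 2 - lam := Real.sq_sqrt hpos.le
  have hsqpos : 0 < sq := Real.sqrt_pos.mpr hpos
  set a := lam + sq with hadef
  have hb' : b = lam - sq := hb
  have hapos : 0 < a := by nlinarith
  have hbneg : b < 0 := by rw [hb']; nlinarith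
  have habs : |b| = sq - lam := by rw [abs_of_neg hbneg, hb']; ring
  have hprod : a * b = lam := by rw [hb', hadef]; nlinarith [hsq2]
  have hsumab : a + b = 2 * lam := by rw [hb', hadef]; ring
  have haleb : a ≤ |b| := by rw [habs]; linarith
  set T : ℕ → ℝ := fun k => |b|^k * ‖y 1‖ + |lam| * ∑ s ∈ Finset.Icc 1 k, |b|^(k-s) * ‖l s‖ with hT
  have habsnn : (0:ℝ) ≤ |b| := abs_nonneg b
  have hTnn : ∀ n, 0 ≤ T n := by
    intro n
    apply add_nonneg
    · positivity
    · apply mul_nonneg (abs_nonneg _)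
      exact Finset.sum_nonneg fun s _ => mul_nonneg (by positivity) (norm_nonneg _)
  have hTrec : ∀ n : ℕ, T (n+1) = |b| * T n + |lam| * ‖l (n+1)‖ := by
    intro n
    have hsum : ∑ s ∈ Finset.Icc 1 (n+1), |b|^(n+1-s) * ‖l s‖
        = (∑ s ∈ Finset.Icc 1 n, |b|^(n+1-s) * ‖l s‖) + |b|^(n+1-(n+1)) * ‖l (n+1)‖ :=
      Finset.sum_Icc_succ_top (by omega) _
    have hsum2 : ∑ s ∈ Finset.Icc 1 n, |b|^(n+1-s) * ‖l s‖
        = |b| * ∑ s ∈ Finset.Icc 1 n, |b|^(n-s) * ‖l s‖ := by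
      rw [Finset.mul_sum]
      apply Finset.sum_congr rfl
      intro s hs
      simp only [Finset.mem_Icc] at hs
      have : n + 1 - s = (n - s) + 1 := by omega
      rw [this, pow_succ]
      ring
    simp only [hT]
    rw [hsum, hsum2]
    simp
    ring
  have key : ∀ n : ℕ, ‖y (n+1) - b • y n‖ ≤ T n ∧ ‖y (n+1) - a • y n‖ ≤ T n := by
    intro n
    induction n with
    | zero =>
      simp [hy0, hT]
    | succ n ih =>
      have hrecn : y (n+1+1) = lam • ((2 : ℝ) • y (n+1) - y n + l (n+1)) := by
        have := hrec (n+1) (by omega)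
        simpa using this
      have bound : ∀ (c : ℝ) (v : EuclideanSpace ℝ (Fin N)), |c| ≤ |b| → ‖v‖ ≤ T n →
          ‖c • v + lam • l (n+1)‖ ≤ T (n+1) := by
        intro c v hcb hv
        rw [hTrec n]
        calc ‖c • v + lam • l (n+1)‖ ≤ ‖c • v‖ + ‖lam • l (n+1)‖ := norm_add_le _ _
          _ = |c| * ‖v‖ + |lam| * ‖l (n+1)‖ := by rw [norm_smul, norm_smul]; rfl
          _ ≤ |b| * T n + |lam| * ‖l (n+1)‖ := by
              have := mul_le_mul hcb hv (norm_nonneg _) habsnn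
              linarith
      constructor
      · have heq : y (n+1+1) - b • y (n+1) = a • (y (n+1) - b • y n) + lam • l (n+1) := by
          rw [hrecn]; exact step_helper lam a b _ _ _ hprod hsumab
        rw [heq]
        exact bound a _ (by rw [abs_of_pos hapos]; exact haleb) ih.1
      · have heq : y (n+1+1) - a • y (n+1) = b • (y (n+1) - a • y n) + lam • l (n+1) := by
          rw [hrecn]
          exact step_helper lam b a _ _ _ (by linarith [hprod, mul_comm a b]) (by linarith)
        rw [heq]
        exact bound b _ le_rfl ih.2
  have hmain : ‖y (k+1)‖ ≤ T k := by
    have habpos : 0 < a - b := by rw [hadef, hb']; nlinarith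
    have hbnn : (0:ℝ) ≤ -b := by linarith
    have hcomb := comb_helper a b (y (k+1)) (y k)
    have hnorm : (a - b) * ‖y (k+1)‖ ≤ (a - b) * T k := by
      calc (a - b) * ‖y (k+1)‖ = ‖(a - b) • y (k+1)‖ := by
            rw [norm_smul, Real.norm_eq_abs, abs_of_pos habpos]
        _ = ‖a • (y (k+1) - b • y k) + (-b) • (y (k+1) - a • y k)‖ :=
            congrArg (fun v => ‖v‖) hcomb
        _ ≤ ‖a • (y (k+1) - b • y k)‖ + ‖(-b) • (y (k+1) - a • y k)‖ := norm_add_le _ _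
        _ = a * ‖y (k+1) - b • y k‖ + (-b) * ‖y (k+1) - a • y k‖ := by
            rw [norm_smul, norm_smul, Real.norm_eq_abs, Real.norm_eq_abs,
              abs_of_pos hapos, abs_of_nonneg hbnn]
        _ ≤ a * T k + (-b) * T k := by
            have h1 := mul_le_mul_of_nonneg_left (key k).1 hapos.le
            have h2 := mul_le_mul_of_nonneg_left (key k).2 hbnn
            linarith
        _ = (a - b) * T k := by ring
    exact le_of_mul_le_mul_left hnorm habpos
  have hSnn : (0:ℝ) ≤ ∑ s ∈ Finset.Icc 1 k, |b|^(k-s) * ‖l s‖ :=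
    Finset.sum_nonneg fun s _ => mul_nonneg (by positivity) (norm_nonneg _)
  have hmain' : ‖y (k+1)‖ ≤ |b|^k * ‖y 1‖ + |lam| * ∑ s ∈ Finset.Icc 1 k, |b|^(k-s) * ‖l s‖ :=
    hmain
  have hfin := final_helper ‖y (k+1)‖ (|b|^k * ‖y 1‖)
    (|lam| * ∑ s ∈ Finset.Icc 1 k, |b|^(k-s) * ‖l s‖)
    (norm_nonneg _) (by positivity) (mul_nonneg (abs_nonneg _) hSnn) hmain'
  have hpow : (|b|^k)^2 = |b|^(2*k) := by rw [← pow_mul, mul_comm]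
  have hrhs : 2*(|b|^k * ‖y 1‖)^2 + 2*(|lam| * ∑ s ∈ Finset.Icc 1 k, |b|^(k-s) * ‖l s‖)^2
      = 2 * ‖y 1‖ ^ 2 * |b| ^ (2 * k) +
        2 * lam ^ 2 * (∑ s ∈ Finset.Icc 1 k, |b| ^ (k - s) * ‖l s‖) ^ 2 := by
    rw [mul_pow, mul_pow, hpow, sq_abs]
    ring
  rw [← hrhs]
  exact hfin
end

section
/- Let λ ∈ (0, 1). Let N ≥ 1 and let (y_k)_{k≥0} and (l_k)_{k≥1} be sequences of vectors in ℝ^N with y_0 = 0 and y_{k+1} = λ(2y_k − y_{k−1} + l_k) for all k ≥ 1. Then for every k ≥ 0, (1 − λ) · ‖y_{k+1}‖² ≤ 2λ^k‖y_1‖² + 2λ² · (Σ_{s=1}^{k} λ^{(k−s)/2} ‖l_s‖)². -/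
/-!
Put `μ = √(λ(1 - λ))` and `z_n = (y_{n+1} - λ y_n, μ y_n) ∈ ℝᴺ × ℝᴺ` with the Euclidean norm.
Since `λ² + μ² = λ`, the recurrence reads `z_{n+1} = √λ · R z_n + (λ l_{n+1}, 0)` with `R` a
rotation, so `‖z_{n+1}‖ ≤ √λ ‖z_n‖ + λ ‖l_{n+1}‖`, and the discrete Grönwall inequality bounds
`‖z_k‖` by `√λ^k ‖y_1‖ + λ ∑ √λ^{k-s} ‖l_s‖`. Convexity of `‖·‖²` gives
`(1 - λ) ‖y_{k+1}‖² ≤ ‖z_k‖²`, and `(a + b)² ≤ 2a² + 2b²` finishes.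
-/

open Finset

theorem le_pow_mul_add_sum_Icc {R : Type*} [CommSemiring R] [PartialOrder R] [IsOrderedRing R]
    {u b : ℕ → R} {c : R} (hc : 0 ≤ c) (hu : ∀ n, u (n + 1) ≤ c * u n + b (n + 1)) (n : ℕ) :
    u n ≤ c ^ n * u 0 + ∑ s ∈ Icc 1 n, c ^ (n - s) * b s := by
  have h := discrete_gronwall_prod_general (u := u) (b := fun k ↦ b (k + 1)) (c := fun _ ↦ c)
    (n₀ := 0) (fun n _ ↦ hu n) (fun _ _ ↦ hc) (Nat.zero_le n)
  simp only [prod_const, Nat.card_Ico, Nat.sub_zero] at h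
  rw [← Ico_add_one_right_eq_Icc, ← zero_add 1, ← sum_Ico_add' (fun s ↦ c ^ (n - s) * b s)]
  convert h using 2
  · exact mul_comm _ _
  · exact sum_congr rfl fun _ _ ↦ mul_comm _ _

section InnerProductSpace

variable {E : Type*} [NormedAddCommGroup E] [InnerProductSpace ℝ E]

theorem norm_toLp_rotation (c s : ℝ) (a b : E) :
    ‖WithLp.toLp 2 (c • a - s • b, s • a + c • b)‖ =
      √(c ^ 2 + s ^ 2) * ‖WithLp.toLp 2 (a, b)‖ := by
  rw [← Real.sqrt_sq (norm_nonneg _), ← Real.sqrt_sq (norm_nonneg (WithLp.toLp 2 (a, b))),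
    ← Real.sqrt_mul (by positivity)]
  congr 1
  simp only [WithLp.prod_norm_sq_eq_of_L2, WithLp.toLp_fst, WithLp.toLp_snd, norm_sub_sq_real,
    norm_add_sq_real, norm_smul, inner_smul_left, inner_smul_right,
    Real.norm_eq_abs, mul_pow, sq_abs, RCLike.conj_to_real]
  ring

theorem one_sub_mul_norm_add_smul_sq_le {t : ℝ} (ht : 0 ≤ t) (u x : E) :
    (1 - t) * ‖u + t • x‖ ^ 2 ≤ ‖u‖ ^ 2 + t * (1 - t) * ‖x‖ ^ 2 := by
  have key : ‖u‖ ^ 2 + t * (1 - t) * ‖x‖ ^ 2 - (1 - t) * ‖u + t • x‖ ^ 2 =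
      t * ‖u - (1 - t) • x‖ ^ 2 := by
    simp only [norm_sub_sq_real, norm_add_sq_real, norm_smul, inner_smul_right,
      Real.norm_eq_abs, mul_pow, sq_abs]
    ring
  nlinarith [mul_nonneg ht (sq_nonneg ‖u - (1 - t) • x‖)]

noncomputable def phasePoint (lam : ℝ) (y : ℕ → E) (n : ℕ) : WithLp 2 (E × E) :=
  WithLp.toLp 2 (y (n + 1) - lam • y n, √(lam * (1 - lam)) • y n)

theorem norm_phasePoint_sq {lam : ℝ} (hl0 : 0 ≤ lam) (hl1 : lam ≤ 1) (y : ℕ → E) (n : ℕ) :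
    ‖phasePoint lam y n‖ ^ 2 = ‖y (n + 1) - lam • y n‖ ^ 2 + lam * (1 - lam) * ‖y n‖ ^ 2 := by
  rw [phasePoint, WithLp.prod_norm_sq_eq_of_L2, WithLp.toLp_fst, WithLp.toLp_snd, norm_smul,
    Real.norm_eq_abs, mul_pow, sq_abs, Real.sq_sqrt (mul_nonneg hl0 (sub_nonneg.2 hl1))]

theorem one_sub_mul_norm_sq_le_norm_phasePoint_sq {lam : ℝ} (hl0 : 0 ≤ lam) (hl1 : lam ≤ 1)
    (y : ℕ → E) (n : ℕ) : (1 - lam) * ‖y (n + 1)‖ ^ 2 ≤ ‖phasePoint lam y n‖ ^ 2 := by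
  have h := one_sub_mul_norm_add_smul_sq_le hl0 (y (n + 1) - lam • y n) (y n)
  rwa [sub_add_cancel, ← norm_phasePoint_sq hl0 hl1] at h

theorem norm_phasePoint_zero (lam : ℝ) {y : ℕ → E} (hy0 : y 0 = 0) :
    ‖phasePoint lam y 0‖ = ‖y 1‖ := by
  simp [phasePoint, hy0]

theorem norm_phasePoint_succ_le {lam : ℝ} (hl0 : 0 ≤ lam) (hl1 : lam ≤ 1) {y l : ℕ → E} {n : ℕ}
    (hrec : y (n + 2) = lam • ((2 : ℝ) • y (n + 1) - y n + l (n + 1))) :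
    ‖phasePoint lam y (n + 1)‖ ≤ √lam * ‖phasePoint lam y n‖ + lam * ‖l (n + 1)‖ := by
  set μ := √(lam * (1 - lam))
  have hμ : μ ^ 2 = lam * (1 - lam) := Real.sq_sqrt (mul_nonneg hl0 (sub_nonneg.2 hl1))
  set a := y (n + 1) - lam • y n
  set b := μ • y n
  have hsplit : phasePoint lam y (n + 1) =
      WithLp.toLp 2 (lam • a - μ • b, μ • a + lam • b) + WithLp.toLp 2 (lam • l (n + 1), 0) := by
    rw [← WithLp.toLp_add, Prod.mk_add_mk, phasePoint, hrec]
    congr 2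
    · linear_combination (norm := module) hμ • y n
    · module
  calc ‖phasePoint lam y (n + 1)‖
      ≤ ‖WithLp.toLp 2 (lam • a - μ • b, μ • a + lam • b)‖ +
          ‖WithLp.toLp 2 (lam • l (n + 1), (0 : E))‖ := hsplit ▸ norm_add_le _ _
    _ = √lam * ‖phasePoint lam y n‖ + lam * ‖l (n + 1)‖ := by
        rw [norm_toLp_rotation, hμ, show lam ^ 2 + lam * (1 - lam) = lam by ring,
          WithLp.norm_toLp_fst, norm_smul, Real.norm_of_nonneg hl0]
        rfl

theorem one_sub_mul_norm_sq_le_of_recurrence {lam : ℝ} (hl0 : 0 ≤ lam) (hl1 : lam ≤ 1)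
    {y l : ℕ → E} (hy0 : y 0 = 0) (hrec : ∀ k, 1 ≤ k → y (k + 1) = lam • ((2 : ℝ) • y k - y (k - 1) + l k))
    (k : ℕ) :
    (1 - lam) * ‖y (k + 1)‖ ^ 2 ≤ 2 * lam ^ k * ‖y 1‖ ^ 2 +
      2 * lam ^ 2 * (∑ s ∈ Icc 1 k, √lam ^ (k - s) * ‖l s‖) ^ 2 := by
  set S := ∑ s ∈ Icc 1 k, √lam ^ (k - s) * ‖l s‖
  have hbound : ‖phasePoint lam y k‖ ≤ √lam ^ k * ‖y 1‖ + lam * S := by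
    have h := le_pow_mul_add_sum_Icc (u := fun n ↦ ‖phasePoint lam y n‖)
      (b := fun s ↦ lam * ‖l s‖) (Real.sqrt_nonneg lam)
      (fun n ↦ norm_phasePoint_succ_le hl0 hl1 (hrec (n + 1) n.succ_pos)) k
    simpa only [norm_phasePoint_zero lam hy0, mul_left_comm _ lam, ← mul_sum] using h
  have hpow : (√lam ^ k) ^ 2 = lam ^ k := by rw [← pow_mul, mul_comm, pow_mul, Real.sq_sqrt hl0]
  calc (1 - lam) * ‖y (k + 1)‖ ^ 2
      ≤ ‖phasePoint lam y k‖ ^ 2 := one_sub_mul_norm_sq_le_norm_phasePoint_sq hl0 hl1 y k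
    _ ≤ (√lam ^ k * ‖y 1‖ + lam * S) ^ 2 := by gcongr
    _ ≤ 2 * ((√lam ^ k * ‖y 1‖) ^ 2 + (lam * S) ^ 2) := add_sq_le
    _ = _ := by rw [mul_pow, hpow]; ring

end InnerProductSpace

theorem stmt_9_general (lam : ℝ) (hlam : lam ∈ Set.Ioo (0 : ℝ) 1)
    (N : ℕ)
    (y : ℕ → EuclideanSpace ℝ (Fin N)) (l : ℕ → EuclideanSpace ℝ (Fin N))
    (hy0 : y 0 = 0)
    (hrec : ∀ k, 1 ≤ k → y (k + 1) = lam • ((2 : ℝ) • y k - y (k - 1) + l k))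
    (k : ℕ) :
    (1 - lam) * ‖y (k + 1)‖ ^ 2 ≤ 2 * lam ^ k * ‖y 1‖ ^ 2 +
      2 * lam ^ 2 * (∑ s ∈ Finset.Icc 1 k, (Real.sqrt lam) ^ (k - s) * ‖l s‖) ^ 2 :=
  one_sub_mul_norm_sq_le_of_recurrence hlam.1.le hlam.2.le hy0 hrec k

theorem stmt_9 (lam : ℝ) (hlam : lam ∈ Set.Ioo (0 : ℝ) 1)
    (N : ℕ) (hN : 1 ≤ N)
    (y : ℕ → EuclideanSpace ℝ (Fin N)) (l : ℕ → EuclideanSpace ℝ (Fin N))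
    (hy0 : y 0 = 0)
    (hrec : ∀ k, 1 ≤ k → y (k + 1) = lam • ((2 : ℝ) • y k - y (k - 1) + l k))
    (k : ℕ) :
    (1 - lam) * ‖y (k + 1)‖ ^ 2 ≤ 2 * lam ^ k * ‖y 1‖ ^ 2 +
      2 * lam ^ 2 * (∑ s ∈ Finset.Icc 1 k, (Real.sqrt lam) ^ (k - s) * ‖l s‖) ^ 2 :=
  stmt_9_general lam hlam N y l hy0 hrec k
end

section
/- Let λ ∈ (−1/3, 0) and set b = λ − √(λ² − λ). Let N ≥ 1 and let (y_k)_{k≥0} and (l_k)_{k≥1} be sequences of vectors in ℝ^N with y_0 = 0 and y_{k+1} = λ(2y_k − y_{k−1} + l_k) for all k ≥ 1. Then for every K ≥ 1, Σ_{k=1}^{K} ‖y_k‖² ≤ (2/(1 − b²)) · ‖y_1‖² + (2λ²/(1 − |b|)²) · Σ_{s=1}^{K−1} ‖l_s‖². -/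
/-!
With `a = λ + √(λ² - λ)` and `b = λ - √(λ² - λ)` the roots of `x² - 2λx + λ`, the recurrence reads
`y (n + 2) = (a + b) • y (n + 1) - (a * b) • y n + λ • l (n + 1)`. Variation of constants expresses
`y (m + 1)` through the fundamental solution `h n = (aⁿ - bⁿ) / (a - b)` as
`h (m + 1) • y 1 + ∑ₛ h (m + 1 - s) • λ • l s`. Since `0 ≤ a ≤ -b`, and `-b < 1` exactly because
`λ > -1/3`, the opposite signs of `a` and `b` give `|h (m + 1)| ≤ |b| ^ m`. After
`(u + v)² ≤ 2u² + 2v²`, a geometric sum bounds the `y 1` part, and a weighted Cauchy–Schwarz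
inequality followed by Fubini (a discrete Young inequality) bounds the convolution part.
-/

open Finset

def fundamentalSolution {R : Type*} [CommRing R] (p q : R) : ℕ → R
  | 0 => 0
  | 1 => 1
  | n + 2 => p * fundamentalSolution p q (n + 1) - q * fundamentalSolution p q n

section FundamentalSolution

variable {R : Type*} [CommRing R]

@[simp]
lemma fundamentalSolution_zero (p q : R) : fundamentalSolution p q 0 = 0 := rfl

@[simp]
lemma fundamentalSolution_one (p q : R) : fundamentalSolution p q 1 = 1 := rfl

lemma fundamentalSolution_add_two (p q : R) (n : ℕ) :
    fundamentalSolution p q (n + 2) =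
      p * fundamentalSolution p q (n + 1) - q * fundamentalSolution p q n := rfl

lemma sub_mul_fundamentalSolution (a b : R) (n : ℕ) :
    (a - b) * fundamentalSolution (a + b) (a * b) n = a ^ n - b ^ n := by
  induction n using Nat.twoStepInduction with
  | zero => simp
  | one => simp
  | more n ih₀ ih₁ =>
    rw [fundamentalSolution_add_two]
    linear_combination (a + b) * ih₁ - (a * b) * ih₀

lemma abs_fundamentalSolution_succ_le {a b : ℝ} (ha : 0 ≤ a) (hab : a ≤ -b) (hb : b < 0)
    (m : ℕ) : |fundamentalSolution (a + b) (a * b) (m + 1)| ≤ |b| ^ m := by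
  rw [abs_of_neg hb]
  have hpow : a ^ (m + 1) ≤ a * (-b) ^ m := by
    rw [pow_succ']
    exact mul_le_mul_of_nonneg_left (pow_le_pow_left₀ ha hab m) ha
  refine le_of_mul_le_mul_left ?_ (by linarith : 0 < a - b)
  calc (a - b) * |fundamentalSolution (a + b) (a * b) (m + 1)|
      = |a ^ (m + 1) - b ^ (m + 1)| := by
        rw [← sub_mul_fundamentalSolution, abs_mul, abs_of_pos (by linarith : 0 < a - b)]
    _ ≤ |a ^ (m + 1)| + |b ^ (m + 1)| := abs_sub _ _
    _ = a ^ (m + 1) + (-b) ^ (m + 1) := by rw [abs_pow, abs_pow, abs_of_nonneg ha, abs_of_neg hb]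
    _ ≤ (a - b) * (-b) ^ m := by rw [pow_succ' (-b)]; linarith

end FundamentalSolution

section VariationOfConstants

variable {R E : Type*} [CommRing R] [AddCommGroup E] [Module R E] {p q : R}

lemma sum_fundamentalSolution_smul_add_two (g : ℕ → E) (n : ℕ) :
    ∑ s ∈ Icc 1 (n + 2), fundamentalSolution p q (n + 3 - s) • g s =
      p • ∑ s ∈ Icc 1 (n + 1), fundamentalSolution p q (n + 2 - s) • g s
        - q • ∑ s ∈ Icc 1 n, fundamentalSolution p q (n + 1 - s) • g s + g (n + 2) := by
  have hstep : ∀ s ∈ Icc 1 (n + 1), fundamentalSolution p q (n + 3 - s) • g s =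
      p • (fundamentalSolution p q (n + 2 - s) • g s)
        - q • (fundamentalSolution p q (n + 1 - s) • g s) := by
    intro s hs
    rw [mem_Icc] at hs
    rw [show n + 3 - s = n + 1 - s + 2 by omega, show n + 2 - s = n + 1 - s + 1 by omega,
      fundamentalSolution_add_two, sub_smul, mul_smul, mul_smul]
  have hlast : ∑ s ∈ Icc 1 (n + 1), fundamentalSolution p q (n + 1 - s) • g s =
      ∑ s ∈ Icc 1 n, fundamentalSolution p q (n + 1 - s) • g s := by
    rw [sum_Icc_succ_top (by omega)]
    simp
  rw [sum_Icc_succ_top (by omega), sum_congr rfl hstep, sum_sub_distrib, ← smul_sum, ← smul_sum,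
    hlast, show n + 3 - (n + 2) = 1 by omega, fundamentalSolution_one, one_smul]

lemma eq_fundamentalSolution_smul_add_sum {y g : ℕ → E} (hy0 : y 0 = 0)
    (hrec : ∀ n, y (n + 2) = p • y (n + 1) - q • y n + g (n + 1)) (n : ℕ) :
    y (n + 1) = fundamentalSolution p q (n + 1) • y 1
      + ∑ s ∈ Icc 1 n, fundamentalSolution p q (n + 1 - s) • g s := by
  induction n using Nat.twoStepInduction with
  | zero => simp
  | one => simp [hrec 0, hy0, fundamentalSolution_add_two]
  | more n ih₀ ih₁ =>
    rw [hrec (n + 1), ih₁, ih₀, show n + 1 + 2 = n + 2 + 1 by rfl,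
      sum_fundamentalSolution_smul_add_two, fundamentalSolution_add_two p q (n + 1)]
    module

lemma norm_succ_le_of_recurrence {F : Type*} [SeminormedAddCommGroup F] [NormedSpace ℝ F]
    {a b : ℝ} (ha : 0 ≤ a) (hab : a ≤ -b) (hb : b < 0) {y g : ℕ → F} (hy0 : y 0 = 0)
    (hrec : ∀ n, y (n + 2) = (a + b) • y (n + 1) - (a * b) • y n + g (n + 1)) (m : ℕ) :
    ‖y (m + 1)‖ ≤ |b| ^ m * ‖y 1‖ + ∑ s ∈ Icc 1 m, |b| ^ (m - s) * ‖g s‖ := by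
  rw [eq_fundamentalSolution_smul_add_sum hy0 hrec m]
  refine (norm_add_le _ _).trans (add_le_add ?_ ((norm_sum_le _ _).trans ?_))
  · rw [norm_smul, Real.norm_eq_abs]
    exact mul_le_mul_of_nonneg_right (abs_fundamentalSolution_succ_le ha hab hb m) (norm_nonneg _)
  · refine sum_le_sum fun s hs => ?_
    rw [mem_Icc] at hs
    rw [norm_smul, Real.norm_eq_abs, show m + 1 - s = m - s + 1 by omega]
    exact mul_le_mul_of_nonneg_right (abs_fundamentalSolution_succ_le ha hab hb _) (norm_nonneg _)

end VariationOfConstants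

section GeometricConvolution

variable {c : ℝ}

lemma geom_sum_le_inv_one_sub (hc₀ : 0 ≤ c) (hc₁ : c < 1) (n : ℕ) :
    ∑ i ∈ range n, c ^ i ≤ (1 - c)⁻¹ := by
  have := geom_sum_Ico_le_of_lt_one (m := 0) (n := n) hc₀ hc₁
  rwa [← range_eq_Ico, pow_zero, one_div] at this

lemma sq_sum_geom_mul_le (hc₀ : 0 ≤ c) (hc₁ : c < 1) (x : ℕ → ℝ) (m : ℕ) :
    (∑ s ∈ Icc 1 m, c ^ (m - s) * x s) ^ 2 ≤
      (1 - c)⁻¹ * ∑ s ∈ Icc 1 m, c ^ (m - s) * x s ^ 2 := by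
  have hweights : ∑ s ∈ Icc 1 m, c ^ (m - s) ≤ (1 - c)⁻¹ :=
    calc ∑ s ∈ Icc 1 m, c ^ (m - s)
        ≤ ∑ s ∈ range (m + 1), c ^ (m - s) :=
          sum_le_sum_of_subset_of_nonneg (fun s hs => by simp only [mem_Icc, mem_range] at hs ⊢; omega)
            fun _ _ _ => pow_nonneg hc₀ _
      _ = ∑ i ∈ range (m + 1), c ^ i := sum_range_reflect (c ^ ·) (m + 1)
      _ ≤ (1 - c)⁻¹ := geom_sum_le_inv_one_sub hc₀ hc₁ _
  refine (sum_sq_le_sum_mul_sum_of_sq_le_mul _ (f := fun s => c ^ (m - s))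
    (g := fun s => c ^ (m - s) * x s ^ 2) (fun _ _ => pow_nonneg hc₀ _)
    (fun _ _ => mul_nonneg (pow_nonneg hc₀ _) (sq_nonneg _)) fun _ _ => le_of_eq (by ring)).trans ?_
  exact mul_le_mul_of_nonneg_right hweights
    (sum_nonneg fun _ _ => mul_nonneg (pow_nonneg hc₀ _) (sq_nonneg _))

/-- A truncated discrete Young inequality `‖k ∗ x‖₂ ≤ ‖k‖₁ ‖x‖₂` for the kernel `k i = cⁱ`. -/
lemma sum_range_sq_sum_geom_mul_le (hc₀ : 0 ≤ c) (hc₁ : c < 1) (x : ℕ → ℝ) (K : ℕ) :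
    ∑ m ∈ range K, (∑ s ∈ Icc 1 m, c ^ (m - s) * x s) ^ 2 ≤
      (1 - c)⁻¹ ^ 2 * ∑ s ∈ Icc 1 (K - 1), x s ^ 2 := by
  have hfubini : ∑ m ∈ range K, ∑ s ∈ Icc 1 m, c ^ (m - s) * x s ^ 2 =
      ∑ s ∈ Icc 1 (K - 1), ∑ m ∈ Ico s K, c ^ (m - s) * x s ^ 2 :=
    sum_comm' fun m s => by simp only [mem_range, mem_Icc, mem_Ico]; omega
  have hinner : ∀ s, ∑ m ∈ Ico s K, c ^ (m - s) ≤ (1 - c)⁻¹ := fun s => by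
    simpa [sum_Ico_eq_sum_range] using geom_sum_le_inv_one_sub hc₀ hc₁ (K - s)
  have hpos : 0 ≤ (1 - c)⁻¹ := inv_nonneg.mpr (by linarith)
  calc ∑ m ∈ range K, (∑ s ∈ Icc 1 m, c ^ (m - s) * x s) ^ 2
      ≤ ∑ m ∈ range K, (1 - c)⁻¹ * ∑ s ∈ Icc 1 m, c ^ (m - s) * x s ^ 2 :=
        sum_le_sum fun m _ => sq_sum_geom_mul_le hc₀ hc₁ x m
    _ = (1 - c)⁻¹ * ∑ s ∈ Icc 1 (K - 1), (∑ m ∈ Ico s K, c ^ (m - s)) * x s ^ 2 := by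
        simp only [← mul_sum, hfubini, sum_mul]
    _ ≤ (1 - c)⁻¹ * ∑ s ∈ Icc 1 (K - 1), (1 - c)⁻¹ * x s ^ 2 := by
        gcongr with s
        exact hinner s
    _ = (1 - c)⁻¹ ^ 2 * ∑ s ∈ Icc 1 (K - 1), x s ^ 2 := by rw [← mul_sum]; ring

lemma sum_range_sq_le_of_le_geom (hc₀ : 0 ≤ c) (hc₁ : c < 1) {u x : ℕ → ℝ} (A : ℝ)
    (hu : ∀ m, 0 ≤ u m) (hle : ∀ m, u m ≤ c ^ m * A + ∑ s ∈ Icc 1 m, c ^ (m - s) * x s)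
    (K : ℕ) :
    ∑ m ∈ range K, u m ^ 2 ≤
      2 / (1 - c ^ 2) * A ^ 2 + 2 / (1 - c) ^ 2 * ∑ s ∈ Icc 1 (K - 1), x s ^ 2 := by
  have hsq : ∀ m, u m ^ 2 ≤
      2 * A ^ 2 * (c ^ 2) ^ m + 2 * (∑ s ∈ Icc 1 m, c ^ (m - s) * x s) ^ 2 := fun m =>
    calc u m ^ 2 ≤ (c ^ m * A + ∑ s ∈ Icc 1 m, c ^ (m - s) * x s) ^ 2 :=
          pow_le_pow_left₀ (hu m) (hle m) 2
      _ ≤ 2 * ((c ^ m * A) ^ 2 + (∑ s ∈ Icc 1 m, c ^ (m - s) * x s) ^ 2) := add_sq_le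
      _ = _ := by ring
  have hgeom : ∑ m ∈ range K, (c ^ 2) ^ m ≤ (1 - c ^ 2)⁻¹ :=
    geom_sum_le_inv_one_sub (sq_nonneg c) (by nlinarith) K
  calc ∑ m ∈ range K, u m ^ 2
      ≤ 2 * A ^ 2 * ∑ m ∈ range K, (c ^ 2) ^ m
        + 2 * ∑ m ∈ range K, (∑ s ∈ Icc 1 m, c ^ (m - s) * x s) ^ 2 := by
        rw [mul_sum, mul_sum, ← sum_add_distrib]
        exact sum_le_sum fun m _ => hsq m
    _ ≤ 2 * A ^ 2 * (1 - c ^ 2)⁻¹ + 2 * ((1 - c)⁻¹ ^ 2 * ∑ s ∈ Icc 1 (K - 1), x s ^ 2) := by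
        gcongr
        exact sum_range_sq_sum_geom_mul_le hc₀ hc₁ x K
    _ = _ := by simp only [div_eq_mul_inv, inv_pow]; ring

end GeometricConvolution

theorem stmt_10_general (lam : ℝ) (hlam : lam ∈ Set.Ioo (-(1/3) : ℝ) 0)
    (b : ℝ) (hb : b = lam - Real.sqrt (lam ^ 2 - lam))
    (N : ℕ)
    (y : ℕ → EuclideanSpace ℝ (Fin N)) (l : ℕ → EuclideanSpace ℝ (Fin N))
    (hy0 : y 0 = 0)
    (hrec : ∀ k, 1 ≤ k → y (k + 1) = lam • ((2 : ℝ) • y k - y (k - 1) + l k))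
    (K : ℕ) :
    ∑ k ∈ Finset.Icc 1 K, ‖y k‖ ^ 2 ≤ (2 / (1 - b ^ 2)) * ‖y 1‖ ^ 2 +
      (2 * lam ^ 2 / (1 - |b|) ^ 2) * ∑ s ∈ Finset.Icc 1 (K - 1), ‖l s‖ ^ 2 := by
  obtain ⟨hlam₁, hlam₂⟩ := hlam
  set a := lam + Real.sqrt (lam ^ 2 - lam)
  have hr : Real.sqrt (lam ^ 2 - lam) ^ 2 = lam ^ 2 - lam := Real.sq_sqrt (by nlinarith)
  have hr₀ := Real.sqrt_nonneg (lam ^ 2 - lam)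
  have ha : 0 ≤ a := by nlinarith
  have hb₀ : b < 0 := by nlinarith
  have hb₁ : |b| < 1 := by rw [abs_of_neg hb₀]; nlinarith
  have hrec' : ∀ n, y (n + 2) = (a + b) • y (n + 1) - (a * b) • y n + lam • l (n + 1) := by
    intro n
    have hsum : a + b = 2 * lam := by rw [hb]; ring
    have hprod : a * b = lam := by rw [hb]; linear_combination -hr
    rw [hrec (n + 1) (by omega), hsum, hprod, Nat.add_sub_cancel]
    module
  have hnorm := norm_succ_le_of_recurrence (g := fun s => lam • l s) ha (by rw [hb]; linarith) hb₀ hy0 hrec'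
  simp only [norm_smul, Real.norm_eq_abs] at hnorm
  have := sum_range_sq_le_of_le_geom (abs_nonneg b) hb₁ _ (fun m => norm_nonneg _) hnorm K
  simp only [mul_pow, sq_abs, ← mul_sum] at this
  rw [← Ico_add_one_right_eq_Icc, sum_Ico_eq_sum_range, Nat.add_sub_cancel]
  simp only [add_comm 1]
  exact this.trans_eq (by ring)

theorem stmt_10 (lam : ℝ) (hlam : lam ∈ Set.Ioo (-(1/3) : ℝ) 0)
    (b : ℝ) (hb : b = lam - Real.sqrt (lam ^ 2 - lam))
    (N : ℕ) (hN : 1 ≤ N)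
    (y : ℕ → EuclideanSpace ℝ (Fin N)) (l : ℕ → EuclideanSpace ℝ (Fin N))
    (hy0 : y 0 = 0)
    (hrec : ∀ k, 1 ≤ k → y (k + 1) = lam • ((2 : ℝ) • y k - y (k - 1) + l k))
    (K : ℕ) (hK : 1 ≤ K) :
    ∑ k ∈ Finset.Icc 1 K, ‖y k‖ ^ 2 ≤ (2 / (1 - b ^ 2)) * ‖y 1‖ ^ 2 +
      (2 * lam ^ 2 / (1 - |b|) ^ 2) * ∑ s ∈ Finset.Icc 1 (K - 1), ‖l s‖ ^ 2 :=
  stmt_10_general lam hlam b hb N y l hy0 hrec K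
end

section
/- Let n, N ≥ 1 and L, σ, ζ ≥ 0. Let f_1, …, f_n : ℝ^N → ℝ be differentiable and set f = (1/n)Σ_{i=1}^n f_i. Assume each ∇f_i is L-Lipschitz, and assume (1/n)Σ_{i=1}^n ‖∇f_i(y) − ∇f(y)‖² ≤ ζ² for all y ∈ ℝ^N. Let x_1, …, x_n ∈ ℝ^N and x̄ = (1/n)Σ_{i=1}^n x_i. Let μ be a probability measure on a measurable space Ω and let g_1, …, g_n : Ω → ℝ^N be square-integrable random vectors with ∫ ‖g_i(ω) − ∇f_i(x_i)‖² dμ(ω) ≤ σ² for each i. Then ∫ Σ_{i=1}^n ‖g_i(ω)‖² dμ(ω) ≤ 4nσ² + 4nζ² + 4L² Σ_{i=1}^n ‖x_i − x̄‖² + 4n‖∇f(x̄)‖². -/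
/-!
Split each stochastic gradient as
`g_i = (g_i - ∇f_i(x_i)) + (∇f_i(x_i) - ∇f_i(x̄)) + (∇f_i(x̄) - ∇f(x̄)) + ∇f(x̄)`
and use `‖a + b + c + d‖² ≤ 4 (‖a‖² + ‖b‖² + ‖c‖² + ‖d‖²)`. After integrating and summing over `i`,
the four terms are bounded by the noise variance, the Lipschitz bound on the gradients, the
gradient dissimilarity at `x̄`, and `‖∇f(x̄)‖²` respectively.
-/

open Finset MeasureTheory

lemma add_add_add_sq_le (p q r s : ℝ) :
    (p + q + r + s) ^ 2 ≤ 4 * p ^ 2 + 4 * q ^ 2 + 4 * r ^ 2 + 4 * s ^ 2 := by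
  calc (p + q + r + s) ^ 2 = ((p + q) + (r + s)) ^ 2 := by ring
    _ ≤ 2 * ((p + q) ^ 2 + (r + s) ^ 2) := add_sq_le
    _ ≤ 2 * (2 * (p ^ 2 + q ^ 2) + 2 * (r ^ 2 + s ^ 2)) := by gcongr <;> exact add_sq_le
    _ = _ := by ring

lemma norm_sq_le_four_mul_telescope {E : Type*} [SeminormedAddCommGroup E] (v a b c : E) :
    ‖v‖ ^ 2 ≤ 4 * ‖v - a‖ ^ 2 + 4 * ‖a - b‖ ^ 2 + 4 * ‖b - c‖ ^ 2 + 4 * ‖c‖ ^ 2 := by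
  have htri : ‖v‖ ≤ ‖v - a‖ + ‖a - b‖ + ‖b - c‖ + ‖c‖ := by
    calc ‖v‖ = ‖(v - a) + (a - b) + (b - c) + c‖ := by abel_nf
      _ ≤ _ := norm_add₄_le
  calc ‖v‖ ^ 2 ≤ (‖v - a‖ + ‖a - b‖ + ‖b - c‖ + ‖c‖) ^ 2 := by gcongr
    _ ≤ _ := add_add_add_sq_le _ _ _ _

lemma integral_norm_sq_le_four_mul_telescope {Ω E : Type*} [MeasurableSpace Ω]
    [NormedAddCommGroup E] {μ : Measure Ω} [IsProbabilityMeasure μ] {g : Ω → E}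
    (hg : MemLp g 2 μ) (a b c : E) :
    ∫ ω, ‖g ω‖ ^ 2 ∂μ ≤
      4 * ∫ ω, ‖g ω - a‖ ^ 2 ∂μ + 4 * ‖a - b‖ ^ 2 + 4 * ‖b - c‖ ^ 2 + 4 * ‖c‖ ^ 2 := by
  have hint : Integrable (fun ω => ‖g ω - a‖ ^ 2) μ :=
    (hg.sub (memLp_const a)).norm.integrable_sq
  have hconst : Integrable (fun _ : Ω => 4 * ‖a - b‖ ^ 2 + 4 * ‖b - c‖ ^ 2 + 4 * ‖c‖ ^ 2) μ :=
    integrable_const _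
  calc ∫ ω, ‖g ω‖ ^ 2 ∂μ
      ≤ ∫ ω, 4 * ‖g ω - a‖ ^ 2 + (4 * ‖a - b‖ ^ 2 + 4 * ‖b - c‖ ^ 2 + 4 * ‖c‖ ^ 2) ∂μ :=
        integral_mono hg.norm.integrable_sq ((hint.const_mul 4).add hconst) fun ω => by
          have := norm_sq_le_four_mul_telescope (g ω) a b c
          linarith
    _ = _ := by
        rw [integral_add (hint.const_mul 4) hconst, integral_const_mul, integral_const,
          probReal_univ, one_smul]
        ring

lemma sum_le_card_mul_of_inv_card_mul_sum_le {ι : Type*} (s : Finset ι) (a : ι → ℝ) {c : ℝ}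
    (h : (1 / (#s : ℝ)) * ∑ i ∈ s, a i ≤ c) : ∑ i ∈ s, a i ≤ #s * c := by
  rcases s.eq_empty_or_nonempty with rfl | hs
  · simp
  · have hcard : (0 : ℝ) < #s := by exact_mod_cast hs.card_pos
    rw [one_div, inv_mul_le_iff₀ hcard] at h
    exact h

lemma sum_norm_sub_sq_le_of_lipschitz {ι E F : Type*} [SeminormedAddCommGroup E]
    [SeminormedAddCommGroup F] (s : Finset ι) (G : ι → E → F) {L : ℝ}
    (hG : ∀ i x y, ‖G i x - G i y‖ ≤ L * ‖x - y‖) (x : ι → E) (y : E) :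
    ∑ i ∈ s, ‖G i (x i) - G i y‖ ^ 2 ≤ L ^ 2 * ∑ i ∈ s, ‖x i - y‖ ^ 2 := by
  rw [mul_sum]
  refine sum_le_sum fun i _ => ?_
  calc ‖G i (x i) - G i y‖ ^ 2 ≤ (L * ‖x i - y‖) ^ 2 := by gcongr; exact hG i (x i) y
    _ = L ^ 2 * ‖x i - y‖ ^ 2 := by ring

theorem stmt_16_general (n N : ℕ)
    (L σ ζ : ℝ)
    (f : Fin n → EuclideanSpace ℝ (Fin N) → ℝ)
    (F : EuclideanSpace ℝ (Fin N) → ℝ)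
    (hLip : ∀ i x y, ‖gradient (f i) x - gradient (f i) y‖ ≤ L * ‖x - y‖)
    (hvar : ∀ y, (1 / (n : ℝ)) * ∑ i, ‖gradient (f i) y - gradient F y‖ ^ 2 ≤ ζ ^ 2)
    (x : Fin n → EuclideanSpace ℝ (Fin N))
    (xbar : EuclideanSpace ℝ (Fin N))
    {Ω : Type*} [MeasurableSpace Ω] (μ : Measure Ω) [IsProbabilityMeasure μ]
    (g : Fin n → Ω → EuclideanSpace ℝ (Fin N))
    (hg : ∀ i, MemLp (g i) 2 μ)
    (hgvar : ∀ i, ∫ ω, ‖g i ω - gradient (f i) (x i)‖ ^ 2 ∂μ ≤ σ ^ 2) :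
    ∫ ω, ∑ i, ‖g i ω‖ ^ 2 ∂μ ≤
      4 * n * σ ^ 2 + 4 * n * ζ ^ 2 + 4 * L ^ 2 * ∑ i, ‖x i - xbar‖ ^ 2 +
        4 * n * ‖gradient F xbar‖ ^ 2 := by
  have hdissim : ∑ i, ‖gradient (f i) xbar - gradient F xbar‖ ^ 2 ≤ n * ζ ^ 2 := by
    have h := sum_le_card_mul_of_inv_card_mul_sum_le univ
      (fun i => ‖gradient (f i) xbar - gradient F xbar‖ ^ 2) (c := ζ ^ 2)
      (by rw [card_univ, Fintype.card_fin]; exact hvar xbar)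
    rwa [card_univ, Fintype.card_fin] at h
  have hdrift := sum_norm_sub_sq_le_of_lipschitz univ (fun i => gradient (f i)) hLip x xbar
  have hnoise : ∑ i, ∫ ω, ‖g i ω - gradient (f i) (x i)‖ ^ 2 ∂μ ≤ n * σ ^ 2 := by
    simpa using sum_le_sum fun i (_ : i ∈ univ) => hgvar i
  calc ∫ ω, ∑ i, ‖g i ω‖ ^ 2 ∂μ = ∑ i, ∫ ω, ‖g i ω‖ ^ 2 ∂μ :=
        integral_finsetSum _ fun i _ => (hg i).norm.integrable_sq
    _ ≤ ∑ i, (4 * ∫ ω, ‖g i ω - gradient (f i) (x i)‖ ^ 2 ∂μ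
          + 4 * ‖gradient (f i) (x i) - gradient (f i) xbar‖ ^ 2
          + 4 * ‖gradient (f i) xbar - gradient F xbar‖ ^ 2 + 4 * ‖gradient F xbar‖ ^ 2) :=
        sum_le_sum fun i _ => integral_norm_sq_le_four_mul_telescope (hg i) _ _ _
    _ ≤ _ := by
        simp only [sum_add_distrib, ← mul_sum, sum_const, card_univ, Fintype.card_fin,
          nsmul_eq_mul]
        linarith

theorem stmt_16 (n N : ℕ) (hn : 1 ≤ n) (hN : 1 ≤ N)
    (L σ ζ : ℝ) (hL : 0 ≤ L) (hσ : 0 ≤ σ) (hζ : 0 ≤ ζ)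
    (f : Fin n → EuclideanSpace ℝ (Fin N) → ℝ)
    (hdiff : ∀ i, Differentiable ℝ (f i))
    (F : EuclideanSpace ℝ (Fin N) → ℝ)
    (hF : F = fun y => (1 / (n : ℝ)) * ∑ i, f i y)
    (hLip : ∀ i x y, ‖gradient (f i) x - gradient (f i) y‖ ≤ L * ‖x - y‖)
    (hvar : ∀ y, (1 / (n : ℝ)) * ∑ i, ‖gradient (f i) y - gradient F y‖ ^ 2 ≤ ζ ^ 2)
    (x : Fin n → EuclideanSpace ℝ (Fin N))
    (xbar : EuclideanSpace ℝ (Fin N)) (hxbar : xbar = (1 / (n : ℝ)) • ∑ i, x i)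
    {Ω : Type*} [MeasurableSpace Ω] (μ : Measure Ω) [IsProbabilityMeasure μ]
    (g : Fin n → Ω → EuclideanSpace ℝ (Fin N))
    (hg : ∀ i, MemLp (g i) 2 μ)
    (hgvar : ∀ i, ∫ ω, ‖g i ω - gradient (f i) (x i)‖ ^ 2 ∂μ ≤ σ ^ 2) :
    ∫ ω, ∑ i, ‖g i ω‖ ^ 2 ∂μ ≤
      4 * n * σ ^ 2 + 4 * n * ζ ^ 2 + 4 * L ^ 2 * ∑ i, ‖x i - xbar‖ ^ 2 +
        4 * n * ‖gradient F xbar‖ ^ 2 :=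
  stmt_16_general n N L σ ζ f F hLip hvar x xbar μ g hg hgvar
end

section
/- Let n, N ≥ 1, L, σ ≥ 0, η > 0. Let f_1, …, f_n : ℝ^N → ℝ be differentiable with each ∇f_i L-Lipschitz. Let x_1, …, x_n, x'_1, …, x'_n ∈ ℝ^N, and let W ∈ ℝ^{n×n} be a symmetric doubly stochastic matrix (symmetric, nonnegative entries, row sums 1). Let μ be a probability measure on a measurable space Ω and let g_1, …, g_n, g'_1, …, g'_n : Ω → ℝ^N be square-integrable random vectors with ∫ ‖g_i − ∇f_i(x_i)‖² dμ ≤ σ² and ∫ ‖g'_i − ∇f_i(x'_i)‖² dμ ≤ σ² for each i. Let Q ∈ ℝ^{N×n} be the matrix whose i-th column is (x_i − x'_i)/η, and for each ω let G(ω), G'(ω) ∈ ℝ^{N×n} have i-th columns g_i(ω), g'_i(ω) respectively. Then ∫ ‖(−Q + G(ω) − G'(ω)) W‖_F² dμ(ω) ≤ 2(η^{−2} + 3L²) Σ_{i=1}^n ‖x_i − x'_i‖² + 12nσ². -/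
open Finset MeasureTheory Matrix

/-!
Right multiplication by a doubly stochastic matrix does not increase the Frobenius norm: each
entry of `M * W` is a convex combination of a row of `M` (weights a column of `W`), so Jensen
bounds its square, and the row sums of `W` then recombine the weights to one. The `i`-th column
of `-Q + G - G'` is
`-(x_i - x'_i)/η + (g_i - ∇f_i(x_i)) - (g'_i - ∇f_i(x'_i)) + (∇f_i(x_i) - ∇f_i(x'_i))`;
the Lipschitz bound controls the last term and the variance bounds control the two noise terms
after integration.
-/

theorem Matrix.sum_sq_mul_le_of_mem_doublyStochastic {m n : Type*} [Fintype m] [Fintype n]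
    [DecidableEq n] (M : Matrix m n ℝ) {W : Matrix n n ℝ} (hW : W ∈ doublyStochastic ℝ n) :
    ∑ j, ∑ i, (M * W) j i ^ 2 ≤ ∑ j, ∑ k, M j k ^ 2 := by
  refine sum_le_sum fun j _ => ?_
  have jensen (i : n) : (M * W) j i ^ 2 ≤ ∑ k, W k i * M j k ^ 2 := by
    simpa [mul_apply, mul_comm] using
      (even_two.convexOn_pow (𝕜 := ℝ)).map_sum_le (t := univ) (w := fun k => W k i)
        (p := fun k => M j k) (fun k _ => nonneg_of_mem_doublyStochastic hW)
        (sum_col_of_mem_doublyStochastic hW i) (fun _ _ => Set.mem_univ _)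
  calc ∑ i, (M * W) j i ^ 2 ≤ ∑ i, ∑ k, W k i * M j k ^ 2 := sum_le_sum fun i _ => jensen i
    _ = ∑ k, (∑ i, W k i) * M j k ^ 2 := by rw [sum_comm]; simp only [sum_mul]
    _ = ∑ k, M j k ^ 2 := by simp only [sum_row_of_mem_doublyStochastic hW, one_mul]

/-- Cauchy–Schwarz with weights `1/2, 1/6, 1/6, 1/6`, which sum to one. -/
theorem norm_add_sub_add_sq_le {E : Type*} [SeminormedAddCommGroup E] (a b c d : E) :
    ‖a + b - c + d‖ ^ 2 ≤ 2 * ‖a‖ ^ 2 + 6 * ‖b‖ ^ 2 + 6 * ‖c‖ ^ 2 + 6 * ‖d‖ ^ 2 := by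
  have htri : ‖a + b - c + d‖ ≤ ‖a‖ + ‖b‖ + ‖c‖ + ‖d‖ := by
    have := norm_add_le (a + b - c) d
    have := norm_sub_le (a + b) c
    have := norm_add_le a b
    linarith
  have := norm_nonneg (a + b - c + d)
  nlinarith [sq_nonneg (‖a‖ - 3 * ‖b‖), sq_nonneg (‖a‖ - 3 * ‖c‖), sq_nonneg (‖a‖ - 3 * ‖d‖),
    sq_nonneg (‖b‖ - ‖c‖), sq_nonneg (‖b‖ - ‖d‖), sq_nonneg (‖c‖ - ‖d‖)]

theorem norm_neg_smul_add_sub_sq_le {E : Type*} [NormedAddCommGroup E] [NormedSpace ℝ E]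
    {η L : ℝ} {d u u' p p' : E} (hp : ‖p - p'‖ ≤ L * ‖d‖) :
    ‖-(η⁻¹ • d) + u - u'‖ ^ 2 ≤
      (2 / η ^ 2 + 6 * L ^ 2) * ‖d‖ ^ 2 + 6 * ‖u - p‖ ^ 2 + 6 * ‖u' - p'‖ ^ 2 := by
  have hsplit : -(η⁻¹ • d) + u - u' = -(η⁻¹ • d) + (u - p) - (u' - p') + (p - p') := by abel
  have hp2 : ‖p - p'‖ ^ 2 ≤ L ^ 2 * ‖d‖ ^ 2 := by
    rw [← mul_pow]; exact pow_le_pow_left₀ (norm_nonneg _) hp 2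
  have hd : ‖-(η⁻¹ • d)‖ ^ 2 = 1 / η ^ 2 * ‖d‖ ^ 2 := by
    rw [norm_neg, norm_smul, mul_pow, Real.norm_eq_abs, sq_abs, inv_pow, one_div]
  rw [hsplit]
  refine (norm_add_sub_add_sq_le _ _ _ _).trans ?_
  rw [hd]
  linear_combination 6 * hp2

theorem integral_norm_neg_smul_add_sub_sq_le {Ω E : Type*} [MeasurableSpace Ω] {μ : Measure Ω}
    [IsProbabilityMeasure μ] [NormedAddCommGroup E] [NormedSpace ℝ E] {η L σ : ℝ}
    {d p p' : E} {X Y : Ω → E} (hX : MemLp X 2 μ) (hY : MemLp Y 2 μ)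
    (hXvar : ∫ ω, ‖X ω - p‖ ^ 2 ∂μ ≤ σ ^ 2) (hYvar : ∫ ω, ‖Y ω - p'‖ ^ 2 ∂μ ≤ σ ^ 2)
    (hp : ‖p - p'‖ ≤ L * ‖d‖) :
    ∫ ω, ‖-(η⁻¹ • d) + X ω - Y ω‖ ^ 2 ∂μ ≤ (2 / η ^ 2 + 6 * L ^ 2) * ‖d‖ ^ 2 + 12 * σ ^ 2 := by
  have hXint : Integrable (fun ω => ‖X ω - p‖ ^ 2) μ := (hX.sub (memLp_const p)).norm.integrable_sq
  have hYint : Integrable (fun ω => ‖Y ω - p'‖ ^ 2) μ := (hY.sub (memLp_const p')).norm.integrable_sq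
  have hbound_int : Integrable (fun ω => (2 / η ^ 2 + 6 * L ^ 2) * ‖d‖ ^ 2
      + 6 * ‖X ω - p‖ ^ 2 + 6 * ‖Y ω - p'‖ ^ 2) μ :=
    ((integrable_const _).add (hXint.const_mul 6)).add (hYint.const_mul 6)
  calc ∫ ω, ‖-(η⁻¹ • d) + X ω - Y ω‖ ^ 2 ∂μ
      ≤ ∫ ω, ((2 / η ^ 2 + 6 * L ^ 2) * ‖d‖ ^ 2 + 6 * ‖X ω - p‖ ^ 2 + 6 * ‖Y ω - p'‖ ^ 2) ∂μ :=
        integral_mono (((memLp_const (-(η⁻¹ • d))).add hX).sub hY).norm.integrable_sq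
          hbound_int fun _ => norm_neg_smul_add_sub_sq_le hp
    _ = (2 / η ^ 2 + 6 * L ^ 2) * ‖d‖ ^ 2 + 6 * ∫ ω, ‖X ω - p‖ ^ 2 ∂μ
        + 6 * ∫ ω, ‖Y ω - p'‖ ^ 2 ∂μ := by
      rw [integral_add _ (hYint.const_mul 6), integral_add (integrable_const _) (hXint.const_mul 6),
        integral_const, integral_const_mul, integral_const_mul, probReal_univ, one_smul]
      exact (integrable_const _).add (hXint.const_mul 6)
    _ ≤ (2 / η ^ 2 + 6 * L ^ 2) * ‖d‖ ^ 2 + 12 * σ ^ 2 := by linarith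

theorem stmt_17_general (n N : ℕ)
    (L σ : ℝ) (η : ℝ)
    (f : Fin n → EuclideanSpace ℝ (Fin N) → ℝ)
    (hLip : ∀ i x y, ‖gradient (f i) x - gradient (f i) y‖ ≤ L * ‖x - y‖)
    (x x' : Fin n → EuclideanSpace ℝ (Fin N))
    (W : Matrix (Fin n) (Fin n) ℝ)
    (hsymm : Wᵀ = W) (hWnonneg : ∀ i j, 0 ≤ W i j) (hWrow : ∀ i, ∑ j, W i j = 1)
    {Ω : Type*} [MeasurableSpace Ω] (μ : Measure Ω) [IsProbabilityMeasure μ]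
    (g g' : Fin n → Ω → EuclideanSpace ℝ (Fin N))
    (hg : ∀ i, MemLp (g i) 2 μ) (hg' : ∀ i, MemLp (g' i) 2 μ)
    (hgvar : ∀ i, ∫ ω, ‖g i ω - gradient (f i) (x i)‖ ^ 2 ∂μ ≤ σ ^ 2)
    (hg'var : ∀ i, ∫ ω, ‖g' i ω - gradient (f i) (x' i)‖ ^ 2 ∂μ ≤ σ ^ 2)
    (Q : Matrix (Fin N) (Fin n) ℝ) (hQ : Q = Matrix.of fun j i => (x i - x' i) j / η)
    (G G' : Ω → Matrix (Fin N) (Fin n) ℝ)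
    (hG : G = fun ω => Matrix.of fun j i => g i ω j)
    (hG' : G' = fun ω => Matrix.of fun j i => g' i ω j) :
    ∫ ω, ∑ j, ∑ i, (((-Q + G ω - G' ω) * W) j i) ^ 2 ∂μ ≤
      2 * (1 / η ^ 2 + 3 * L ^ 2) * ∑ i, ‖x i - x' i‖ ^ 2 + 12 * n * σ ^ 2 := by
  have hW : W ∈ doublyStochastic ℝ (Fin n) :=
    mem_doublyStochastic_iff_sum.2 ⟨hWnonneg, hWrow, fun i => by
      simpa only [transpose_apply] using hsymm ▸ hWrow i⟩
  set v : Fin n → Ω → EuclideanSpace ℝ (Fin N) := fun i ω => -(η⁻¹ • (x i - x' i)) + g i ω - g' i ω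
  have hv : ∀ i, Integrable (fun ω => ‖v i ω‖ ^ 2) μ := fun i =>
    (((memLp_const (-(η⁻¹ • (x i - x' i)))).add (hg i)).sub (hg' i)).norm.integrable_sq
  have hcolumns : ∀ ω, ∑ j, ∑ i, (-Q + G ω - G' ω) j i ^ 2 = ∑ i, ‖v i ω‖ ^ 2 := by
    intro ω
    subst hQ hG hG'
    rw [sum_comm]
    simp [v, EuclideanSpace.real_norm_sq_eq, div_eq_inv_mul]
  calc ∫ ω, ∑ j, ∑ i, (((-Q + G ω - G' ω) * W) j i) ^ 2 ∂μ
      ≤ ∫ ω, ∑ i, ‖v i ω‖ ^ 2 ∂μ :=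
        integral_mono_of_nonneg (ae_of_all _ fun ω => by positivity)
          (integrable_finsetSum _ fun i _ => hv i) (ae_of_all _ fun ω =>
            ((-Q + G ω - G' ω).sum_sq_mul_le_of_mem_doublyStochastic hW).trans_eq (hcolumns ω))
    _ = ∑ i, ∫ ω, ‖v i ω‖ ^ 2 ∂μ := integral_finsetSum _ fun i _ => hv i
    _ ≤ ∑ i, ((2 / η ^ 2 + 6 * L ^ 2) * ‖x i - x' i‖ ^ 2 + 12 * σ ^ 2) := sum_le_sum fun i _ =>
        integral_norm_neg_smul_add_sub_sq_le (hg i) (hg' i) (hgvar i) (hg'var i) (hLip i _ _)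
    _ = 2 * (1 / η ^ 2 + 3 * L ^ 2) * ∑ i, ‖x i - x' i‖ ^ 2 + 12 * n * σ ^ 2 := by
      rw [sum_add_distrib, ← mul_sum, sum_const, card_univ, Fintype.card_fin, nsmul_eq_mul]
      ring

theorem stmt_17 (n N : ℕ) (hn : 1 ≤ n) (hN : 1 ≤ N)
    (L σ : ℝ) (hL : 0 ≤ L) (hσ : 0 ≤ σ) (η : ℝ) (hη : 0 < η)
    (f : Fin n → EuclideanSpace ℝ (Fin N) → ℝ)
    (hdiff : ∀ i, Differentiable ℝ (f i))
    (hLip : ∀ i x y, ‖gradient (f i) x - gradient (f i) y‖ ≤ L * ‖x - y‖)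
    (x x' : Fin n → EuclideanSpace ℝ (Fin N))
    (W : Matrix (Fin n) (Fin n) ℝ)
    (hsymm : Wᵀ = W) (hWnonneg : ∀ i j, 0 ≤ W i j) (hWrow : ∀ i, ∑ j, W i j = 1)
    {Ω : Type*} [MeasurableSpace Ω] (μ : Measure Ω) [IsProbabilityMeasure μ]
    (g g' : Fin n → Ω → EuclideanSpace ℝ (Fin N))
    (hg : ∀ i, MemLp (g i) 2 μ) (hg' : ∀ i, MemLp (g' i) 2 μ)
    (hgvar : ∀ i, ∫ ω, ‖g i ω - gradient (f i) (x i)‖ ^ 2 ∂μ ≤ σ ^ 2)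
    (hg'var : ∀ i, ∫ ω, ‖g' i ω - gradient (f i) (x' i)‖ ^ 2 ∂μ ≤ σ ^ 2)
    (Q : Matrix (Fin N) (Fin n) ℝ) (hQ : Q = Matrix.of fun j i => (x i - x' i) j / η)
    (G G' : Ω → Matrix (Fin N) (Fin n) ℝ)
    (hG : G = fun ω => Matrix.of fun j i => g i ω j)
    (hG' : G' = fun ω => Matrix.of fun j i => g' i ω j) :
    ∫ ω, ∑ j, ∑ i, (((-Q + G ω - G' ω) * W) j i) ^ 2 ∂μ ≤
      2 * (1 / η ^ 2 + 3 * L ^ 2) * ∑ i, ‖x i - x' i‖ ^ 2 + 12 * n * σ ^ 2 :=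
  stmt_17_general n N L σ η f hLip x x' W hsymm hWnonneg hWrow μ g g' hg hg' hgvar hg'var Q hQ G G'
    hG hG'
end
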